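/- With P_max defined as the chain-infimum of δ̂ as above, P_max(ρ,σ) ≥ (1/2)‖ρ − σ‖₁ for all density operators ρ, σ. In particular, combined with the upper bound, (1/2)‖ρ−σ‖₁ ≤ P_max(ρ,σ) ≤ ‖ρ−σ‖₁. -/

import Mathlib

open Matrix BigOperators ComplexOrder

variable {n : Type*} [Fintype n] [DecidableEq n]

/-- Trace norm (Schatten 1-norm) of a matrix. -/
noncomputable def traceNorm (A : Matrix n n ℂ) : ℝ :=
  let hA := (Matrix.posSemidef_conjTranspose_mul_self A).isHermitian
  ((hA.eigenvectorUnitary.1 * diagonal (((↑) : ℝ → ℂ) ∘ (√·) ∘ hA.eigenvalues) *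
    (star hA.eigenvectorUnitary : Matrix n n ℂ)).trace).re

/-- A density operator: positive semidefinite with trace 1. -/
def IsDensity (ρ : Matrix n n ℂ) : Prop := ρ.PosSemidef ∧ ρ.trace = 1

/-- δ̃(ρ,σ): smallest mixing weight ε with ρ = (1-ε)σ + εσ'. -/
noncomputable def deltaTilde (ρ σ : Matrix n n ℂ) : ℝ :=
  sInf {ε : ℝ | ε ∈ Set.Icc (0:ℝ) 1 ∧
    ∃ σ' : Matrix n n ℂ, IsDensity σ' ∧ ρ = (1 - ε) • σ + ε • σ'}

/-- δ̂ = min of δ̃ in both orders. -/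
noncomputable def deltaHat (ρ σ : Matrix n n ℂ) : ℝ :=
  min (deltaTilde ρ σ) (deltaTilde σ ρ)

/-- P_max: infimum over finite chains of density operators from ρ to σ of the
sum of δ̂ over consecutive pairs. -/
noncomputable def Pmax (ρ σ : Matrix n n ℂ) : ℝ :=
  sInf {s : ℝ | ∃ (m : ℕ) (ω : Fin (m + 1) → Matrix n n ℂ),
    ω 0 = ρ ∧ ω (Fin.last m) = σ ∧ (∀ i, IsDensity (ω i)) ∧
    s = ∑ i : Fin m, deltaHat (ω i.castSucc) (ω i.succ)}

/-! For the lower bound, `ρ = (1 - ε) σ + ε σ'` gives `ρ - σ = ε (σ' - σ)` with `‖σ' - σ‖₁ ≤ 2`,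
so `δ̃(ρ, σ) ≥ ½ ‖ρ - σ‖₁`; along a chain the trace norm of the telescoping sum is at most the sum
of the trace norms. The triangle inequality comes from `-P ≤ X ≤ P → ‖X‖₁ ≤ tr P`: in an
eigenbasis of `X` the diagonal of `P` dominates `|λᵢ|`.

For the upper bound put `T = ½ ‖ρ - σ‖₁`, which is the trace of both `(ρ - σ)⁺` and `(ρ - σ)⁻`.
The state `ω = (1 - T) ρ + (ρ - σ)⁻ = (1 - T) σ + ((1 - T) (ρ - σ)⁺ + T (ρ - σ)⁻)` satisfies
`δ̃(ω, ρ), δ̃(ω, σ) ≤ T`, so the chain `ρ, ω, σ` costs at most `2 T`. -/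

open scoped MatrixOrder

lemma Fin.sum_castSucc_sub_succ {G : Type*} [AddCommGroup G] {m : ℕ} (f : Fin (m + 1) → G) :
    ∑ i : Fin m, (f i.castSucc - f i.succ) = f 0 - f (Fin.last m) := by
  have h₁ := Fin.sum_univ_castSucc f
  have h₂ := Fin.sum_univ_succ f
  rw [Finset.sum_sub_distrib, eq_sub_of_add_eq h₁.symm, eq_sub_of_add_eq' h₂.symm]
  abel

section CFCAbs

variable {A : Type*} [NonUnitalRing A] [StarRing A] [TopologicalSpace A]
  [Module ℝ A] [SMulCommClass ℝ A A] [IsScalarTower ℝ A A]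
  [NonUnitalContinuousFunctionalCalculus ℝ A IsSelfAdjoint]
  [PartialOrder A] [StarOrderedRing A] [NonnegSpectrumClass ℝ A]
  [IsTopologicalRing A] [T2Space A]

lemma CFC.le_abs (a : A) (ha : IsSelfAdjoint a := by cfc_tac) : a ≤ CFC.abs a := by
  rw [← sub_nonneg, CFC.abs_sub_self a ha]
  exact nsmul_nonneg (CFC.negPart_nonneg a) 2

lemma CFC.neg_abs_le (a : A) (ha : IsSelfAdjoint a := by cfc_tac) : -CFC.abs a ≤ a := by
  rw [neg_le_iff_add_nonneg', CFC.abs_add_self a ha]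
  exact nsmul_nonneg (CFC.posPart_nonneg a) 2

end CFCAbs

lemma Matrix.IsHermitian.trace_cfc {A : Matrix n n ℂ} (hA : A.IsHermitian) (f : ℝ → ℝ) :
    (cfc f A).trace = ∑ i, (f (hA.eigenvalues i) : ℂ) := by
  rw [hA.cfc_eq, IsHermitian.cfc, Unitary.conjStarAlgAut_apply, trace_mul_cycle,
    Unitary.coe_star_mul_self, one_mul, trace_diagonal]
  rfl

lemma Matrix.trace_conjStarAlgAut (U : unitary (Matrix n n ℂ)) (A : Matrix n n ℂ) :
    (Unitary.conjStarAlgAut ℂ _ U A).trace = A.trace := by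
  rw [Unitary.conjStarAlgAut_apply, trace_mul_cycle, Unitary.coe_star_mul_self, one_mul]

lemma traceNorm_eq_re_trace_abs (A : Matrix n n ℂ) : traceNorm A = (CFC.abs A).trace.re := by
  have hA := posSemidef_conjTranspose_mul_self A
  rw [CFC.abs, star_eq_conjTranspose, CFC.sqrt_eq_real_sqrt _ hA.nonneg, cfcₙ_eq_cfc,
    hA.isHermitian.cfc_eq, IsHermitian.cfc, Unitary.conjStarAlgAut_apply]
  rfl

lemma ofReal_traceNorm (A : Matrix n n ℂ) : (traceNorm A : ℂ) = (CFC.abs A).trace := by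
  have h := (nonneg_iff_posSemidef.mp (CFC.abs_nonneg A)).trace_nonneg
  rw [traceNorm_eq_re_trace_abs, Complex.ext_iff]
  exact ⟨rfl, (Complex.nonneg_iff.mp h).2⟩

lemma traceNorm_nonneg (A : Matrix n n ℂ) : 0 ≤ traceNorm A := by
  rw [traceNorm_eq_re_trace_abs]
  exact (Complex.nonneg_iff.mp (nonneg_iff_posSemidef.mp (CFC.abs_nonneg A)).trace_nonneg).1

lemma traceNorm_neg (A : Matrix n n ℂ) : traceNorm (-A) = traceNorm A := by
  rw [traceNorm_eq_re_trace_abs, CFC.abs_neg, traceNorm_eq_re_trace_abs]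

lemma traceNorm_smul (c : ℝ) (A : Matrix n n ℂ) : traceNorm (c • A) = |c| * traceNorm A := by
  rw [traceNorm_eq_re_trace_abs, CFC.abs_smul, trace_smul, Real.norm_eq_abs, Complex.real_smul,
    Complex.re_ofReal_mul, traceNorm_eq_re_trace_abs]

lemma Matrix.IsHermitian.traceNorm_eq_sum_abs_eigenvalues {A : Matrix n n ℂ}
    (hA : A.IsHermitian) : traceNorm A = ∑ i, |hA.eigenvalues i| := by
  rw [traceNorm_eq_re_trace_abs, CFC.abs_eq_cfc_norm A hA, hA.trace_cfc, ← Complex.ofReal_sum,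
    Complex.ofReal_re]
  rfl

lemma traceNorm_le_re_trace_of_neg_le_of_le {X P : Matrix n n ℂ} (hX : X.IsHermitian)
    (hPX : -P ≤ X) (hXP : X ≤ P) : traceNorm X ≤ P.trace.re := by
  set φ := Unitary.conjStarAlgAut ℂ _ (star hX.eigenvectorUnitary)
  have hφX : φ X = diagonal fun i => (hX.eigenvalues i : ℂ) :=
    hX.conjStarAlgAut_star_eigenvectorUnitary
  have hdiag (i : n) : |hX.eigenvalues i| ≤ (φ P i i).re := by
    have h₁ := (map_le_map_iff φ).mpr hXP
    have h₂ := (map_le_map_iff φ).mpr hPX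
    rw [hφX, le_iff] at h₁
    rw [hφX, map_neg, le_iff] at h₂
    have d₁ := (Complex.le_def.mp (h₁.diag_nonneg (i := i))).1
    have d₂ := (Complex.le_def.mp (h₂.diag_nonneg (i := i))).1
    simp only [Matrix.sub_apply, Matrix.neg_apply, diagonal_apply_eq,
      Complex.sub_re, Complex.neg_re, Complex.zero_re, Complex.ofReal_re] at d₁ d₂
    exact abs_le.mpr ⟨by linarith, by linarith⟩
  calc traceNorm X = ∑ i, |hX.eigenvalues i| := hX.traceNorm_eq_sum_abs_eigenvalues
    _ ≤ ∑ i, (φ P i i).re := Finset.sum_le_sum fun i _ => hdiag i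
    _ = P.trace.re := by
      rw [← trace_conjStarAlgAut (star hX.eigenvectorUnitary) P, trace, Complex.re_sum]
      rfl

lemma traceNorm_sum_le {ι : Type*} (s : Finset ι) (X : ι → Matrix n n ℂ)
    (hX : ∀ i ∈ s, (X i).IsHermitian) :
    traceNorm (∑ i ∈ s, X i) ≤ ∑ i ∈ s, traceNorm (X i) := by
  have hP : -∑ i ∈ s, CFC.abs (X i) ≤ ∑ i ∈ s, X i := by
    rw [← Finset.sum_neg_distrib]
    exact Finset.sum_le_sum fun i hi => CFC.neg_abs_le (X i) (hX i hi)
  have hP' : ∑ i ∈ s, X i ≤ ∑ i ∈ s, CFC.abs (X i) :=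
    Finset.sum_le_sum fun i hi => CFC.le_abs (X i) (hX i hi)
  refine (traceNorm_le_re_trace_of_neg_le_of_le (isSelfAdjoint_sum s hX) hP hP').trans_eq ?_
  simp only [trace_sum, Complex.re_sum, traceNorm_eq_re_trace_abs]

lemma Matrix.IsHermitian.trace_posPart_eq_trace_negPart {Δ : Matrix n n ℂ} (hΔ : Δ.IsHermitian)
    (h₀ : Δ.trace = 0) :
    (Δ⁺).trace = (1 / 2 * traceNorm Δ : ℝ) ∧ (Δ⁻).trace = (1 / 2 * traceNorm Δ : ℝ) := by
  have hsum := congrArg trace (CFC.posPart_add_negPart Δ hΔ)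
  have hdiff := congrArg trace (CFC.posPart_sub_negPart Δ hΔ)
  rw [trace_add, ← ofReal_traceNorm] at hsum
  rw [trace_sub, h₀] at hdiff
  push_cast
  exact ⟨by linear_combination (1 / 2 : ℂ) * hsum + (1 / 2 : ℂ) * hdiff,
    by linear_combination (1 / 2 : ℂ) * hsum - (1 / 2 : ℂ) * hdiff⟩

lemma IsDensity.traceNorm_sub_le_two {ρ σ : Matrix n n ℂ} (hρ : IsDensity ρ) (hσ : IsDensity σ) :
    traceNorm (ρ - σ) ≤ 2 := by
  have hρ₀ : 0 ≤ ρ := nonneg_iff_posSemidef.mpr hρ.1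
  have hσ₀ : 0 ≤ σ := nonneg_iff_posSemidef.mpr hσ.1
  have h₁ : -(ρ + σ) ≤ ρ - σ := by
    rw [neg_add, sub_eq_add_neg]; exact add_le_add_left (neg_le_self hρ₀) _
  have h₂ : ρ - σ ≤ ρ + σ := by
    rw [sub_eq_add_neg]; exact add_le_add_right (neg_le_self hσ₀) _
  refine (traceNorm_le_re_trace_of_neg_le_of_le (hρ.1.1.sub hσ.1.1) h₁ h₂).trans_eq ?_
  rw [trace_add, hρ.2, hσ.2]
  norm_num

lemma IsDensity.one_half_mul_traceNorm_sub_le_deltaTilde {ρ σ : Matrix n n ℂ}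
    (hρ : IsDensity ρ) (hσ : IsDensity σ) : 1 / 2 * traceNorm (ρ - σ) ≤ deltaTilde ρ σ := by
  refine le_csInf ⟨1, ⟨zero_le_one, le_rfl⟩, ρ, hρ, by simp⟩ ?_
  rintro ε ⟨⟨hε, -⟩, σ', hσ', rfl⟩
  have hdiff : (1 - ε) • σ + ε • σ' - σ = ε • (σ' - σ) := by module
  rw [hdiff, traceNorm_smul, abs_of_nonneg hε]
  nlinarith [hσ'.traceNorm_sub_le_two hσ]

lemma IsDensity.one_half_mul_traceNorm_sub_le_deltaHat {ρ σ : Matrix n n ℂ}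
    (hρ : IsDensity ρ) (hσ : IsDensity σ) : 1 / 2 * traceNorm (ρ - σ) ≤ deltaHat ρ σ := by
  refine le_min (hρ.one_half_mul_traceNorm_sub_le_deltaTilde hσ) ?_
  rw [← traceNorm_neg, neg_sub]
  exact hσ.one_half_mul_traceNorm_sub_le_deltaTilde hρ

omit [DecidableEq n] in
lemma IsDensity.one_sub_smul_add {ρ X : Matrix n n ℂ} {ε : ℝ} (hρ : IsDensity ρ) (hε : ε ≤ 1)
    (hX : X.PosSemidef) (htr : X.trace = ε) : IsDensity ((1 - ε) • ρ + X) := by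
  refine ⟨(hρ.1.smul (sub_nonneg.mpr hε)).add hX, ?_⟩
  rw [trace_add, trace_smul, hρ.2, htr, Complex.real_smul]
  push_cast
  ring

omit [DecidableEq n] in
lemma deltaTilde_le_of_eq_one_sub_smul_add {ρ σ X : Matrix n n ℂ} {ε : ℝ} (hσ : IsDensity σ)
    (hε₀ : 0 ≤ ε) (hε₁ : ε ≤ 1) (hX : X.PosSemidef) (htr : X.trace = ε)
    (hρ : ρ = (1 - ε) • σ + X) :
    deltaTilde ρ σ ≤ ε := by
  refine csInf_le ⟨0, fun _ h => h.1.1⟩ ⟨⟨hε₀, hε₁⟩, ?_⟩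
  rcases hε₀.eq_or_lt with rfl | hε
  · have hX₀ : X = 0 := hX.trace_eq_zero_iff.mp (by simpa using htr)
    exact ⟨σ, hσ, by simp [hρ, hX₀]⟩
  · refine ⟨ε⁻¹ • X, ⟨hX.smul (inv_nonneg.mpr hε₀), ?_⟩, ?_⟩
    · rw [trace_smul, htr, Complex.real_smul, ← Complex.ofReal_mul, inv_mul_cancel₀ hε.ne',
        Complex.ofReal_one]
    · rw [smul_smul, mul_inv_cancel₀ hε.ne', one_smul, hρ]

omit [DecidableEq n] in
lemma deltaHat_nonneg (ρ σ : Matrix n n ℂ) : 0 ≤ deltaHat ρ σ :=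
  le_min (Real.sInf_nonneg fun _ h => h.1.1) (Real.sInf_nonneg fun _ h => h.1.1)

omit [DecidableEq n] in
lemma Pmax_le_sum_deltaHat {ρ σ : Matrix n n ℂ} {m : ℕ} (ω : Fin (m + 1) → Matrix n n ℂ)
    (h₀ : ω 0 = ρ) (hₘ : ω (Fin.last m) = σ) (hω : ∀ i, IsDensity (ω i)) :
    Pmax ρ σ ≤ ∑ i : Fin m, deltaHat (ω i.castSucc) (ω i.succ) := by
  refine csInf_le ⟨0, ?_⟩ ⟨m, ω, h₀, hₘ, hω, rfl⟩
  rintro _ ⟨m, ω, -, -, -, rfl⟩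
  exact Finset.sum_nonneg fun i _ => deltaHat_nonneg _ _

omit [DecidableEq n] in
lemma le_Pmax {ρ σ : Matrix n n ℂ} {c : ℝ} (hρ : IsDensity ρ) (hσ : IsDensity σ)
    (h : ∀ (m : ℕ) (ω : Fin (m + 1) → Matrix n n ℂ), ω 0 = ρ → ω (Fin.last m) = σ →
      (∀ i, IsDensity (ω i)) → c ≤ ∑ i : Fin m, deltaHat (ω i.castSucc) (ω i.succ)) :
    c ≤ Pmax ρ σ := by
  refine le_csInf ⟨_, 1, ![ρ, σ], rfl, rfl, Fin.forall_fin_two.mpr ⟨hρ, hσ⟩, rfl⟩ ?_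
  rintro _ ⟨m, ω, h₀, hₘ, hω, rfl⟩
  exact h m ω h₀ hₘ hω

omit [DecidableEq n] in
lemma Pmax_le_deltaHat_add_deltaHat {ρ ω σ : Matrix n n ℂ} (hρ : IsDensity ρ)
    (hω : IsDensity ω) (hσ : IsDensity σ) : Pmax ρ σ ≤ deltaHat ρ ω + deltaHat ω σ := by
  refine (Pmax_le_sum_deltaHat ![ρ, ω, σ] rfl rfl ?_).trans_eq ?_
  · simp [Fin.forall_fin_succ, hρ, hω, hσ]
  · simp [Fin.sum_univ_two]

lemma one_half_mul_traceNorm_sub_le_Pmax {ρ σ : Matrix n n ℂ} (hρ : IsDensity ρ)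
    (hσ : IsDensity σ) : 1 / 2 * traceNorm (ρ - σ) ≤ Pmax ρ σ := by
  refine le_Pmax hρ hσ fun m ω h₀ hₘ hω => ?_
  calc 1 / 2 * traceNorm (ρ - σ)
      = 1 / 2 * traceNorm (∑ i : Fin m, (ω i.castSucc - ω i.succ)) := by
        rw [Fin.sum_castSucc_sub_succ, h₀, hₘ]
    _ ≤ 1 / 2 * ∑ i : Fin m, traceNorm (ω i.castSucc - ω i.succ) := by
        gcongr
        exact traceNorm_sum_le _ _ fun i _ => (hω _).1.1.sub (hω _).1.1
    _ = ∑ i : Fin m, 1 / 2 * traceNorm (ω i.castSucc - ω i.succ) := Finset.mul_sum _ _ _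
    _ ≤ ∑ i : Fin m, deltaHat (ω i.castSucc) (ω i.succ) :=
        Finset.sum_le_sum fun i _ => (hω _).one_half_mul_traceNorm_sub_le_deltaHat (hω _)

lemma Pmax_le_traceNorm_sub {ρ σ : Matrix n n ℂ} (hρ : IsDensity ρ) (hσ : IsDensity σ) :
    Pmax ρ σ ≤ traceNorm (ρ - σ) := by
  have hΔ : (ρ - σ).IsHermitian := hρ.1.1.sub hσ.1.1
  obtain ⟨htrPos, htrNeg⟩ :=
    hΔ.trace_posPart_eq_trace_negPart (by rw [trace_sub, hρ.2, hσ.2, sub_self])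
  set T := 1 / 2 * traceNorm (ρ - σ) with hT
  have hT₀ : 0 ≤ T := by positivity [traceNorm_nonneg (ρ - σ)]
  have hT₁ : T ≤ 1 := by linarith [hρ.traceNorm_sub_le_two hσ]
  have hPos : (ρ - σ)⁺.PosSemidef := nonneg_iff_posSemidef.mp (CFC.posPart_nonneg _)
  have hNeg : (ρ - σ)⁻.PosSemidef := nonneg_iff_posSemidef.mp (CFC.negPart_nonneg _)
  set ω := (1 - T) • ρ + (ρ - σ)⁻
  have hω : IsDensity ω := hρ.one_sub_smul_add hT₁ hNeg htrNeg
  have hωρ : deltaTilde ω ρ ≤ T := deltaTilde_le_of_eq_one_sub_smul_add hρ hT₀ hT₁ hNeg htrNeg rfl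
  have hωσ : deltaTilde ω σ ≤ T := by
    refine deltaTilde_le_of_eq_one_sub_smul_add hσ hT₀ hT₁
      ((hPos.smul (sub_nonneg.mpr hT₁)).add (hNeg.smul hT₀)) ?_ ?_
    · rw [trace_add, trace_smul, trace_smul, htrPos, htrNeg]
      simp only [Complex.real_smul]
      push_cast
      ring
    · have hparts := CFC.posPart_sub_negPart (ρ - σ) hΔ
      linear_combination (norm := module) (T - 1) • hparts
  calc Pmax ρ σ ≤ deltaHat ρ ω + deltaHat ω σ := Pmax_le_deltaHat_add_deltaHat hρ hω hσ
    _ ≤ deltaTilde ω ρ + deltaTilde ω σ := add_le_add (min_le_right _ _) (min_le_left _ _)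
    _ ≤ traceNorm (ρ - σ) := by linarith

theorem Pmax_traceNorm_bounds (ρ σ : Matrix n n ℂ)
    (hρ : IsDensity ρ) (hσ : IsDensity σ) :
    (1 / 2) * traceNorm (ρ - σ) ≤ Pmax ρ σ ∧ Pmax ρ σ ≤ traceNorm (ρ - σ) :=
  ⟨one_half_mul_traceNorm_sub_le_Pmax hρ hσ, Pmax_le_traceNorm_sub hρ hσ⟩
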